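/- arXiv:2605.27172 — 2 statements merged into one kernel-verified Lean document; each statement's English description precedes it below -/
import Mathlib

section
/- Let k ≥ 1 be an integer, α ∈ (0,1), ε > 0, and set β = (ε - 2^{-k})/k, assuming 0 < kβ ≤ 2^{-k}. Then (2(1-kβ)/(1+α) - 4β/(1+α)²)·(1 - ((1-α)/2)^{k-1}) ≥ 2/(1+α) - 2·[ (1/(1+α))·((1-α)/2)^{k-1} + (2^{-k}/(1+α))·(1 + 2/(k(1+α))) ]. -/
/-- The key inequality bounding the final precision exponent `g_k` from below in the
multistage analysis. -/
theorem stmt7 (α ε β : ℝ) (k : ℕ) (hk : 1 ≤ k) (hα : 0 < α) (hα1 : α < 1) (hε : 0 < ε)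
    (hβ : β = (ε - (2:ℝ) ^ (-(k:ℝ))) / (k : ℝ))
    (h1 : 0 < (k : ℝ) * β) (h2 : (k : ℝ) * β ≤ (2:ℝ) ^ (-(k:ℝ))) :
    2 / (1 + α)
      - 2 * ((1 / (1 + α)) * ((1 - α) / 2) ^ (k - 1)
             + ((2:ℝ) ^ (-(k:ℝ)) / (1 + α)) * (1 + 2 / ((k : ℝ) * (1 + α))))
    ≤ (2 * (1 - (k : ℝ) * β) / (1 + α) - 4 * β / (1 + α) ^ 2)
        * (1 - ((1 - α) / 2) ^ (k - 1)) := by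
  have hk0 : (0:ℝ) < k := by exact_mod_cast Nat.pos_of_ne_zero (by omega)
  have hA : (0:ℝ) < 1 + α := by linarith
  have hq : (0:ℝ) < ((1 - α) / 2) ^ (k - 1) := pow_pos (by linarith) _
  have hβpos : 0 < β := by nlinarith
  set q := ((1 - α) / 2) ^ (k - 1) with hqdef
  set P := (2:ℝ) ^ (-(k:ℝ)) with hP
  have key : (2 * (1 - (k : ℝ) * β) / (1 + α) - 4 * β / (1 + α) ^ 2) * (1 - q)
      - (2 / (1 + α) - 2 * ((1 / (1 + α)) * q + (P / (1 + α)) * (1 + 2 / ((k : ℝ) * (1 + α)))))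
      = 2 * (P - (k:ℝ) * β) / (1 + α) + 4 * (P - (k:ℝ) * β) / ((k:ℝ) * (1 + α) ^ 2)
        + q * (2 * ((k:ℝ) * β) / (1 + α) + 4 * β / (1 + α) ^ 2) := by
    field_simp
    ring
  have t1 : 0 ≤ 2 * (P - (k:ℝ) * β) / (1 + α) := by
    apply div_nonneg (by linarith) hA.le
  have t2 : 0 ≤ 4 * (P - (k:ℝ) * β) / ((k:ℝ) * (1 + α) ^ 2) := by
    apply div_nonneg (by linarith) (by positivity)
  have t3 : 0 ≤ q * (2 * ((k:ℝ) * β) / (1 + α) + 4 * β / (1 + α) ^ 2) := by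
    apply mul_nonneg hq.le
    have := div_nonneg (by linarith : (0:ℝ) ≤ 2 * ((k:ℝ)*β)) hA.le
    have := div_nonneg (by linarith : (0:ℝ) ≤ 4 * β) (by positivity : (0:ℝ) ≤ (1+α)^2)
    linarith
  linarith
end

section
/- Let w : [0,1]² → [0,1] be a Robinson graphon, and let A, B, C ⊆ [0,1] be measurable sets with A ≤ B ≤ C (i.e., a ≤ b ≤ c for all a ∈ A, b ∈ B, c ∈ C). Then ∫_A ∫_C w(x,y) dy dx ≤ ∫_B ∫_C w(x,y) dy dx and ∫_A ∫_C w(x,y) dy dx ≤ ∫_A ∫_B w(x,y) dy dx. Consequently, Λ(w) ≤ 0 restricted to such triples, i.e., the supremum defining Λ(w) over triples of equal-measure ordered sets is ≤ 0, so Λ(w) = 0 for Robinson w. -/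
/-!
For fixed `y ∈ C`, the Robinson property gives `w a y ≤ w b y` for almost every pair
`a ∈ A`, `b ∈ B` (pairs with `a = b` or `b = y` are null), so every value of `w · y` on `A`
lies below the average of `w · y` over `B`; as `|A| = |B|`, integrating gives
`∫_A w(·, y) ≤ ∫_B w(·, y)`, and Fubini yields `∫_A∫_C w ≤ ∫_B∫_C w`. The comparison with
`∫_A∫_B w` is the same argument in the second variable. Both suprema in `Λ` are therefore
attained at the empty triple, with value `0`.
-/

open MeasureTheory Function
open scoped ENNReal

theorem setIntegral_le_setIntegral_of_ae_le_of_measure_eq {α : Type*} [MeasurableSpace α]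
    {μ : Measure α} {f g : α → ℝ} {s t : Set α} (hf : IntegrableOn f s μ)
    (hg : IntegrableOn g t μ) (hst : μ s = μ t) (ht : μ t ≠ ∞)
    (h : ∀ᵐ a ∂μ.restrict s, ∀ᵐ b ∂μ.restrict t, f a ≤ g b) :
    ∫ a in s, f a ∂μ ≤ ∫ b in t, g b ∂μ := by
  rcases eq_or_ne (μ t) 0 with ht₀ | ht₀
  · simp [Measure.restrict_eq_zero.2 ht₀, Measure.restrict_eq_zero.2 (hst.trans ht₀)]
  have hpos : 0 < μ.real t := ENNReal.toReal_pos ht₀ ht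
  have h_le_avg : ∀ᵐ a ∂μ.restrict s, f a ≤ ⨍ b in t, g b ∂μ := by
    filter_upwards [h] with a ha
    rw [setAverage_eq, smul_eq_mul, le_inv_mul_iff₀ hpos, ← smul_eq_mul, ← setIntegral_const]
    exact integral_mono_ae (integrableOn_const ht) hg ha
  calc ∫ a in s, f a ∂μ ≤ ∫ _ in s, ⨍ b in t, g b ∂μ ∂μ :=
        integral_mono_ae hf (integrableOn_const (hst ▸ ht)) h_le_avg
    _ = μ.real t • ⨍ b in t, g b ∂μ := by
      rw [setIntegral_const, measureReal_def, hst, ← measureReal_def]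
    _ = ∫ b in t, g b ∂μ := measure_smul_setAverage _ ht

section NullSingleton

variable {μ : Measure ℝ} [NullSingletonClass μ] {s : Set ℝ} {y : ℝ}

theorem ae_restrict_lt_of_forall_le (h : ∀ b ∈ s, b ≤ y) : ∀ᵐ b ∂μ.restrict s, b < y := by
  rw [ae_restrict_iff measurableSet_Iio]
  filter_upwards [μ.ae_ne y] with b hb hbs
  exact (h b hbs).lt_of_ne hb

theorem ae_restrict_gt_of_forall_ge (h : ∀ b ∈ s, y ≤ b) : ∀ᵐ b ∂μ.restrict s, y < b := by
  rw [ae_restrict_iff measurableSet_Ioi]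
  filter_upwards [μ.ae_ne y] with b hb hbs
  exact (h b hbs).lt_of_ne (Ne.symm hb)

end NullSingleton

theorem integrable_uncurry_of_norm_le {α β : Type*} [MeasurableSpace α] [MeasurableSpace β]
    {μ : Measure α} {ν : Measure β} [IsFiniteMeasure μ] [IsFiniteMeasure ν] {w : α → β → ℝ}
    (hw : Measurable (uncurry w)) {M : ℝ} (hM : ∀ x y, ‖w x y‖ ≤ M) :
    Integrable (uncurry w) (μ.prod ν) :=
  .of_bound hw.aestronglyMeasurable M (ae_of_all _ fun p => hM p.1 p.2)

def IsRobinsonOn (s : Set ℝ) (w : ℝ → ℝ → ℝ) : Prop :=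
  ∀ ⦃x z y⦄, x ∈ s → y ∈ s → x < z → z < y → w x y ≤ min (w x z) (w z y)

namespace IsRobinsonOn

variable {μ : Measure ℝ} [NullSingletonClass μ] {s A B C : Set ℝ} {w : ℝ → ℝ → ℝ} {M : ℝ}

theorem setIntegral_setIntegral_le_middle_left (hrob : IsRobinsonOn s w)
    (hw : Measurable (uncurry w)) (hM : ∀ x y, ‖w x y‖ ≤ M)
    (hAm : MeasurableSet A) (hCm : MeasurableSet C) (hAs : A ⊆ s) (hCs : C ⊆ s)
    (hAB : ∀ a ∈ A, ∀ b ∈ B, a ≤ b) (hBC : ∀ b ∈ B, ∀ c ∈ C, b ≤ c)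
    (hAB_eq : μ A = μ B) (hB : μ B ≠ ∞) (hC : μ C ≠ ∞) :
    ∫ x in A, ∫ y in C, w x y ∂μ ∂μ ≤ ∫ x in B, ∫ y in C, w x y ∂μ ∂μ := by
  have hA : μ A ≠ ∞ := hAB_eq ▸ hB
  have : IsFiniteMeasure (μ.restrict A) := isFiniteMeasure_restrict.2 hA
  have : IsFiniteMeasure (μ.restrict B) := isFiniteMeasure_restrict.2 hB
  have : IsFiniteMeasure (μ.restrict C) := isFiniteMeasure_restrict.2 hC
  have hwA := integrable_uncurry_of_norm_le (μ := μ.restrict A) (ν := μ.restrict C) hw hM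
  have hwB := integrable_uncurry_of_norm_le (μ := μ.restrict B) (ν := μ.restrict C) hw hM
  have hcol {t : Set ℝ} (ht : μ t ≠ ∞) (y : ℝ) : IntegrableOn (w · y) t μ :=
    Measure.integrableOn_of_bounded ht hw.of_uncurry_right.aestronglyMeasurable
      (ae_of_all _ fun x => hM x y)
  calc ∫ x in A, ∫ y in C, w x y ∂μ ∂μ = ∫ y in C, ∫ x in A, w x y ∂μ ∂μ :=
        integral_integral_swap hwA
    _ ≤ ∫ y in C, ∫ x in B, w x y ∂μ ∂μ := by
        refine setIntegral_mono_on hwA.integral_prod_right hwB.integral_prod_right hCm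
          fun y hy => ?_
        refine setIntegral_le_setIntegral_of_ae_le_of_measure_eq (hcol hA y) (hcol hB y)
          hAB_eq hB ?_
        filter_upwards [ae_restrict_mem hAm] with a ha
        filter_upwards [ae_restrict_gt_of_forall_ge (hAB a ha),
          ae_restrict_lt_of_forall_le fun b hb => hBC b hb y hy] with b hab hby
        exact (hrob (hAs ha) (hCs hy) hab hby).trans (min_le_right _ _)
    _ = ∫ x in B, ∫ y in C, w x y ∂μ ∂μ := (integral_integral_swap hwB).symm

theorem setIntegral_setIntegral_le_middle_right (hrob : IsRobinsonOn s w)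
    (hw : Measurable (uncurry w)) (hM : ∀ x y, ‖w x y‖ ≤ M)
    (hAm : MeasurableSet A) (hCm : MeasurableSet C) (hAs : A ⊆ s) (hCs : C ⊆ s)
    (hAB : ∀ a ∈ A, ∀ b ∈ B, a ≤ b) (hBC : ∀ b ∈ B, ∀ c ∈ C, b ≤ c)
    (hCB_eq : μ C = μ B) (hA : μ A ≠ ∞) (hB : μ B ≠ ∞) :
    ∫ x in A, ∫ y in C, w x y ∂μ ∂μ ≤ ∫ x in A, ∫ y in B, w x y ∂μ ∂μ := by
  have : IsFiniteMeasure (μ.restrict A) := isFiniteMeasure_restrict.2 hA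
  have : IsFiniteMeasure (μ.restrict B) := isFiniteMeasure_restrict.2 hB
  have hC : μ C ≠ ∞ := hCB_eq ▸ hB
  have : IsFiniteMeasure (μ.restrict C) := isFiniteMeasure_restrict.2 hC
  have hwC := integrable_uncurry_of_norm_le (μ := μ.restrict A) (ν := μ.restrict C) hw hM
  have hwB := integrable_uncurry_of_norm_le (μ := μ.restrict A) (ν := μ.restrict B) hw hM
  have hrow {t : Set ℝ} (ht : μ t ≠ ∞) (x : ℝ) : IntegrableOn (w x) t μ :=
    Measure.integrableOn_of_bounded ht hw.of_uncurry_left.aestronglyMeasurable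
      (ae_of_all _ (hM x))
  refine setIntegral_mono_on hwC.integral_prod_left hwB.integral_prod_left hAm fun x hx => ?_
  refine setIntegral_le_setIntegral_of_ae_le_of_measure_eq (hrow hC x) (hrow hB x) hCB_eq hB ?_
  filter_upwards [ae_restrict_mem hCm] with c hc
  filter_upwards [ae_restrict_gt_of_forall_ge (hAB x hx),
    ae_restrict_lt_of_forall_le fun b hb => hBC b hb c hc] with b hxb hbc
  exact (hrob (hAs hx) (hCs hc) hxb hbc).trans (min_le_left _ _)

end IsRobinsonOn

/-- For a Robinson graphon `w` and measurable ordered sets `A ≤ B ≤ C` in `[0,1]` of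
equal Lebesgue measure, `∫_A∫_C w ≤ ∫_B∫_C w` and `∫_A∫_C w ≤ ∫_A∫_B w`.  Consequently
each supremum in the definition of the `Λ`-statistic is `0`, so `Λ(w) = 0`. -/
theorem stmt13 (w : ℝ → ℝ → ℝ)
    (hmeas : Measurable (fun p : ℝ × ℝ => w p.1 p.2))
    (hrange : ∀ x y, w x y ∈ Set.Icc (0:ℝ) 1)
    (hrob : ∀ x z y : ℝ, 0 ≤ x → x < z → z < y → y ≤ 1 → w x y ≤ min (w x z) (w z y)) :
    (∀ A B C : Set ℝ,
      MeasurableSet A → MeasurableSet B → MeasurableSet C →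
      A ⊆ Set.Icc 0 1 → B ⊆ Set.Icc 0 1 → C ⊆ Set.Icc 0 1 →
      (∀ a ∈ A, ∀ b ∈ B, a ≤ b) → (∀ b ∈ B, ∀ c ∈ C, b ≤ c) →
      volume A = volume B → volume B = volume C →
      (∫ x in A, ∫ y in C, w x y) ≤ (∫ x in B, ∫ y in C, w x y) ∧
      (∫ x in A, ∫ y in C, w x y) ≤ (∫ x in A, ∫ y in B, w x y)) ∧
    (1/2) * sSup {t : ℝ | ∃ A B C : Set ℝ,
        MeasurableSet A ∧ MeasurableSet B ∧ MeasurableSet C ∧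
        A ⊆ Set.Icc 0 1 ∧ B ⊆ Set.Icc 0 1 ∧ C ⊆ Set.Icc 0 1 ∧
        (∀ a ∈ A, ∀ b ∈ B, a ≤ b) ∧ (∀ b ∈ B, ∀ c ∈ C, b ≤ c) ∧
        volume A = volume B ∧ volume B = volume C ∧
        t = (∫ x in A, ∫ y in C, w x y) - (∫ x in B, ∫ y in C, w x y)}
    + (1/2) * sSup {t : ℝ | ∃ A B C : Set ℝ,
        MeasurableSet A ∧ MeasurableSet B ∧ MeasurableSet C ∧
        A ⊆ Set.Icc 0 1 ∧ B ⊆ Set.Icc 0 1 ∧ C ⊆ Set.Icc 0 1 ∧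
        (∀ a ∈ A, ∀ b ∈ B, a ≤ b) ∧ (∀ b ∈ B, ∀ c ∈ C, b ≤ c) ∧
        volume A = volume B ∧ volume B = volume C ∧
        t = (∫ x in A, ∫ y in C, w x y) - (∫ x in A, ∫ y in B, w x y)}
    = 0 := by
  have hrob' : IsRobinsonOn (Set.Icc 0 1) w := fun x z y hx hy hxz hzy =>
    hrob x z y hx.1 hxz hzy hy.2
  have hbound (x y : ℝ) : ‖w x y‖ ≤ 1 :=
    abs_le.2 ⟨by linarith [(hrange x y).1], (hrange x y).2⟩
  have hfin {s : Set ℝ} (hs : s ⊆ Set.Icc 0 1) : volume s ≠ ∞ :=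
    ((measure_mono hs).trans_lt measure_Icc_lt_top).ne
  refine (and_iff_left_of_imp fun robinson_ineqs => ?_).2
    fun A B C hAm _ hCm hAs hBs hCs hAB hBC hAB_eq hBC_eq =>
      ⟨hrob'.setIntegral_setIntegral_le_middle_left hmeas hbound hAm hCm hAs hCs hAB hBC
          hAB_eq (hfin hBs) (hfin hCs),
        hrob'.setIntegral_setIntegral_le_middle_right hmeas hbound hAm hCm hAs hCs hAB hBC
          hBC_eq.symm (hfin hAs) (hfin hBs)⟩
  rw [IsGreatest.csSup_eq (a := 0) ⟨?_, ?_⟩, IsGreatest.csSup_eq (a := 0) ⟨?_, ?_⟩, mul_zero,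
    add_zero]
  · exact ⟨∅, ∅, ∅, by simp⟩
  · rintro _ ⟨A, B, C, hAm, hBm, hCm, hAs, hBs, hCs, hAB, hBC, hAB_eq, hBC_eq, rfl⟩
    exact sub_nonpos.2 (robinson_ineqs A B C hAm hBm hCm hAs hBs hCs hAB hBC hAB_eq hBC_eq).2
  · exact ⟨∅, ∅, ∅, by simp⟩
  · rintro _ ⟨A, B, C, hAm, hBm, hCm, hAs, hBs, hCs, hAB, hBC, hAB_eq, hBC_eq, rfl⟩
    exact sub_nonpos.2 (robinson_ineqs A B C hAm hBm hCm hAs hBs hCs hAB hBC hAB_eq hBC_eq).1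
end
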